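/- arXiv:2405.18206 — 4 statements merged into one kernel-verified Lean document; each statement's English description precedes it below -/
import Mathlib

section
/- Let (Ω, P) be a probability space with X : Ω → 𝒳, T : Ω → {0,1}, Y : Ω → ℝ bounded. Suppose μ̃ : 𝒳 → ℝ is bounded measurable and h : 𝒳 → ℝ is measurable with |E[(Y − μ̃(X)) · h(X) · 𝟙[T=1]]| ≤ α (a multi-accuracy condition with test function h·𝟙[T=1]). If h(x) = 1/e(x) where e(x) = P(T=1 | X=x) and E[Y(1) | X] = E[Y | X, T=1] a.s. (unconfoundedness with consistency), then |E[μ̃(X)] − E[Y(1)]| ≤ α, where Y(1) denotes the potential outcome under treatment. -/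
/-!
Multiplying the multi-accuracy residual by the treatment indicator lets consistency replace
`Y` by `Y(1)`, so the residual splits into `E[h(X)·T·Y(1)] − E[h(X)·T·μ̃(X)]`. Conditioning on
`X` turns each factor `T` into `e(X)`, which the weight `h = 1/e` cancels: the two terms are
`E[Y(1)]` (the IPW identification formula) and `E[μ̃(X)]`.
-/

open MeasureTheory

section

variable {Ω 𝒳 : Type*} [MeasurableSpace Ω] {P : Measure Ω}

theorem integral_sub_mul_mul_eq_of_mul_eq {Y Y1 T m w : Ω → ℝ}
    (hcons : ∀ ω, Y ω * T ω = Y1 ω * T ω)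
    (hY1 : Integrable (fun ω => w ω * (T ω * Y1 ω)) P)
    (hm : Integrable (fun ω => w ω * (T ω * m ω)) P) :
    ∫ ω, (Y ω - m ω) * w ω * T ω ∂P =
      (∫ ω, w ω * (T ω * Y1 ω) ∂P) - ∫ ω, w ω * (T ω * m ω) ∂P := by
  rw [← integral_sub hY1 hm]
  congr 1
  ext ω
  linear_combination w ω * hcons ω

theorem integral_comp_mul_eq_of_mul_eq_one {X : Ω → 𝒳} {h e : 𝒳 → ℝ}
    (hhe : ∀ x, h x * e x = 1) {U V : Ω → ℝ}
    (hUV : ∫ ω, h (X ω) * U ω ∂P = ∫ ω, h (X ω) * (e (X ω) * V ω) ∂P) :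
    ∫ ω, h (X ω) * U ω ∂P = ∫ ω, V ω ∂P := by
  rw [hUV]
  congr 1
  ext ω
  rw [← mul_assoc, hhe, one_mul]

end

theorem multiaccuracy_ipw_bias_bound_general
    {Ω 𝒳 : Type*} [MeasurableSpace Ω] [MeasurableSpace 𝒳]
    (P : Measure Ω) [IsProbabilityMeasure P]
    (X : Ω → 𝒳) (T Y Y1 : Ω → ℝ) (e μt h : 𝒳 → ℝ) (α : ℝ)
    (hX : Measurable X) (hT : Measurable T) (hY1 : Measurable Y1)
    (hμt : Measurable μt) (hh : Measurable h)
    (hTbin : ∀ ω, T ω = 0 ∨ T ω = 1)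
    (B : ℝ) (hY1b : ∀ ω, |Y1 ω| ≤ B)
    (hμtb : ∃ C, ∀ x, |μt x| ≤ C)
    (ν : ℝ) (hν : 0 < ν) (heb : ∀ x, ν ≤ e x ∧ e x ≤ 1 - ν)
    -- consistency: `Y·𝟙[T=1] = Y(1)·𝟙[T=1]`
    (hcons : ∀ ω, Y ω * T ω = Y1 ω * T ω)
    -- `e(x) = P(T=1 | X=x)` a.s.
    (hCE_T : ∀ g : 𝒳 → ℝ, Measurable g → (∃ C, ∀ x, |g x| ≤ C) →
      ∫ ω, g (X ω) * T ω ∂P = ∫ ω, g (X ω) * e (X ω) ∂P)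
    -- ignorability: `E[Y(1)·𝟙[T=1] | X] = e(X)·E[Y(1) | X]` a.s.,
    -- i.e. `E[Y(1) | X, T] = E[Y(1) | X]` a.s. combined with the propensity identity
    (hUnconf : ∀ g : 𝒳 → ℝ, Measurable g → (∃ C, ∀ x, |g x| ≤ C) →
      ∫ ω, g (X ω) * (T ω * Y1 ω) ∂P = ∫ ω, g (X ω) * (e (X ω) * Y1 ω) ∂P)
    -- the test function is the inverse propensity score
    (hhe : ∀ x, h x = 1 / e x)
    -- multi-accuracy with test function `h·𝟙[T=1]`
    (hMA : |∫ ω, (Y ω - μt (X ω)) * h (X ω) * T ω ∂P| ≤ α) :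
    |(∫ ω, μt (X ω) ∂P) - ∫ ω, Y1 ω ∂P| ≤ α := by
  obtain ⟨C, hC⟩ := hμtb
  have he_pos (x : 𝒳) : 0 < e x := hν.trans_le (heb x).1
  have hh_mul_e (x : 𝒳) : h x * e x = 1 := by rw [hhe, one_div_mul_cancel (he_pos x).ne']
  have hh_bound (x : 𝒳) : |h x| ≤ 1 / ν := by
    rw [hhe, abs_of_pos (one_div_pos.2 (he_pos x))]
    exact one_div_le_one_div_of_le hν (heb x).1
  have hT_bound (ω : Ω) : |T ω| ≤ 1 := by rcases hTbin ω with hω | hω <;> simp [hω]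
  have weighted_integrable {f : Ω → ℝ} (hf : Integrable f P) :
      Integrable (fun ω => h (X ω) * (T ω * f ω)) P :=
    (hf.bdd_mul hT.aestronglyMeasurable (ae_of_all _ hT_bound)).bdd_mul
      (hh.comp hX).aestronglyMeasurable (ae_of_all _ fun ω => hh_bound (X ω))
  have hY1_int : Integrable Y1 P := .of_bound hY1.aestronglyMeasurable B (ae_of_all _ hY1b)
  have hμt_int : Integrable (fun ω => μt (X ω)) P :=
    .of_bound (hμt.comp hX).aestronglyMeasurable C (ae_of_all _ fun ω => hC (X ω))
  have hμt_CE : ∫ ω, h (X ω) * (T ω * μt (X ω)) ∂P =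
      ∫ ω, h (X ω) * (e (X ω) * μt (X ω)) ∂P := by
    have hbound (x : 𝒳) : |h x * μt x| ≤ 1 / ν * C := by
      rw [abs_mul]
      exact mul_le_mul (hh_bound x) (hC x) (abs_nonneg _) (by positivity)
    have := hCE_T (fun x => h x * μt x) (hh.mul hμt) ⟨_, hbound⟩
    simpa only [mul_assoc, mul_comm (μt _)] using this
  rw [integral_sub_mul_mul_eq_of_mul_eq hcons (weighted_integrable hY1_int)
      (weighted_integrable hμt_int),
    integral_comp_mul_eq_of_mul_eq_one hh_mul_e (hUnconf h hh ⟨_, hh_bound⟩),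
    integral_comp_mul_eq_of_mul_eq_one hh_mul_e hμt_CE, abs_sub_comm] at hMA
  exact hMA

/-- If `μ̃` is bounded measurable and satisfies the multi-accuracy
condition `|E[(Y − μ̃(X))·h(X)·𝟙[T=1]]| ≤ α` with `h = 1/e`, where `e(x) = P(T=1|X=x)`,
then under unconfoundedness and consistency `|E[μ̃(X)] − E[Y(1)]| ≤ α`.
`T : Ω → ℝ` takes values in `{0,1}` so that `T ω` is the indicator `𝟙[T=1]`;
conditional-expectation statements are encoded by their defining integral identities
against bounded measurable test functions of `X`. -/
theorem multiaccuracy_ipw_bias_bound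
    {Ω 𝒳 : Type*} [MeasurableSpace Ω] [MeasurableSpace 𝒳]
    (P : Measure Ω) [IsProbabilityMeasure P]
    (X : Ω → 𝒳) (T Y Y1 : Ω → ℝ) (e μt h : 𝒳 → ℝ) (α : ℝ)
    (hX : Measurable X) (hT : Measurable T) (hY : Measurable Y) (hY1 : Measurable Y1)
    (he : Measurable e) (hμt : Measurable μt) (hh : Measurable h)
    (hTbin : ∀ ω, T ω = 0 ∨ T ω = 1)
    (B : ℝ) (hYb : ∀ ω, |Y ω| ≤ B) (hY1b : ∀ ω, |Y1 ω| ≤ B)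
    (hμtb : ∃ C, ∀ x, |μt x| ≤ C)
    (ν : ℝ) (hν : 0 < ν) (heb : ∀ x, ν ≤ e x ∧ e x ≤ 1 - ν)
    -- consistency: `Y·𝟙[T=1] = Y(1)·𝟙[T=1]`
    (hcons : ∀ ω, Y ω * T ω = Y1 ω * T ω)
    -- `e(x) = P(T=1 | X=x)` a.s.
    (hCE_T : ∀ g : 𝒳 → ℝ, Measurable g → (∃ C, ∀ x, |g x| ≤ C) →
      ∫ ω, g (X ω) * T ω ∂P = ∫ ω, g (X ω) * e (X ω) ∂P)
    -- ignorability: `E[Y(1)·𝟙[T=1] | X] = e(X)·E[Y(1) | X]` a.s.,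
    -- i.e. `E[Y(1) | X, T] = E[Y(1) | X]` a.s. combined with the propensity identity
    (hUnconf : ∀ g : 𝒳 → ℝ, Measurable g → (∃ C, ∀ x, |g x| ≤ C) →
      ∫ ω, g (X ω) * (T ω * Y1 ω) ∂P = ∫ ω, g (X ω) * (e (X ω) * Y1 ω) ∂P)
    -- the test function is the inverse propensity score
    (hhe : ∀ x, h x = 1 / e x)
    -- multi-accuracy with test function `h·𝟙[T=1]`
    (hMA : |∫ ω, (Y ω - μt (X ω)) * h (X ω) * T ω ∂P| ≤ α) :
    |(∫ ω, μt (X ω) ∂P) - ∫ ω, Y1 ω ∂P| ≤ α :=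
  multiaccuracy_ipw_bias_bound_general P X T Y Y1 e μt h α hX hT hY1 hμt hh hTbin B hY1b hμtb ν hν
    heb hcons hCE_T hUnconf hhe hMA
end

section
/- Suppose μ̃₁, μ̃₀ : 𝒳 → ℝ are bounded measurable functions satisfying |E[(Y − μ̃₁(X)) · (𝟙[T=1]/e(X))]| ≤ α and |E[(Y − μ̃₀(X)) · (𝟙[T=0]/(1−e(X)))]| ≤ α, where e(x) = P(T=1 | X=x) with ν ≤ e(x) ≤ 1−ν. Under unconfoundedness and consistency, |E[μ̃₁(X) − μ̃₀(X)] − E[Y(1) − Y(0)]| ≤ 2α. (Multi-accuracy of the outcome models over a class containing the inverse propensity weights implies 2α-consistent regression-adjustment estimation of the ATE.) -/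
open MeasureTheory

private lemma intOfBdd {Ω : Type*} [MeasurableSpace Ω] (P : MeasureTheory.Measure Ω)
    [MeasureTheory.IsFiniteMeasure P] {f : Ω → ℝ} (hf : Measurable f) (C : ℝ)
    (h : ∀ ω, |f ω| ≤ C) : MeasureTheory.Integrable f P := by
  apply MeasureTheory.Integrable.mono' (MeasureTheory.integrable_const C)
    hf.aestronglyMeasurable
  filter_upwards with ω
  simpa using h ω

private lemma absMulLe {a b A B : ℝ} (ha : |a| ≤ A) (hb : |b| ≤ B) : |a * b| ≤ A * B := by
  rw [abs_mul]
  exact mul_le_mul ha hb (abs_nonneg _) ((abs_nonneg a).trans ha)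

/-- Multi-accuracy of the outcome models `μ̃₁, μ̃₀` over a class containing
the inverse propensity weights implies `2α`-consistent regression-adjustment estimation of
the ATE: if `|E[(Y − μ̃₁(X))·𝟙[T=1]/e(X)]| ≤ α` and `|E[(Y − μ̃₀(X))·𝟙[T=0]/(1−e(X))]| ≤ α`,
then under unconfoundedness and consistency
`|E[μ̃₁(X) − μ̃₀(X)] − E[Y(1) − Y(0)]| ≤ 2α`.
`T : Ω → ℝ` takes values in `{0,1}`, so `T ω = 𝟙[T=1]` and `1 − T ω = 𝟙[T=0]`. -/
theorem multiaccuracy_regression_adjustment_ate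
    {Ω 𝒳 : Type*} [MeasurableSpace Ω] [MeasurableSpace 𝒳]
    (P : Measure Ω) [IsProbabilityMeasure P]
    (X : Ω → 𝒳) (T Y Y1 Y0 : Ω → ℝ) (e μt1 μt0 : 𝒳 → ℝ) (α : ℝ)
    (hX : Measurable X) (hT : Measurable T) (hY : Measurable Y)
    (hY1 : Measurable Y1) (hY0 : Measurable Y0)
    (he : Measurable e) (hμt1 : Measurable μt1) (hμt0 : Measurable μt0)
    (hTbin : ∀ ω, T ω = 0 ∨ T ω = 1)
    (B : ℝ) (hY1b : ∀ ω, |Y1 ω| ≤ B) (hY0b : ∀ ω, |Y0 ω| ≤ B)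
    (hμt1b : ∃ C, ∀ x, |μt1 x| ≤ C) (hμt0b : ∃ C, ∀ x, |μt0 x| ≤ C)
    (ν : ℝ) (hν : 0 < ν) (heb : ∀ x, ν ≤ e x ∧ e x ≤ 1 - ν)
    -- consistency: `Y = Y(T)`
    (hcons : ∀ ω, Y ω = T ω * Y1 ω + (1 - T ω) * Y0 ω)
    -- `e(x) = P(T=1 | X=x)` a.s.
    (hCE_T : ∀ g : 𝒳 → ℝ, Measurable g → (∃ C, ∀ x, |g x| ≤ C) →
      ∫ ω, g (X ω) * T ω ∂P = ∫ ω, g (X ω) * e (X ω) ∂P)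
    -- unconfoundedness `{Y(1),Y(0)} ⟂ T | X` (its implications for each arm)
    (hUnconf1 : ∀ g : 𝒳 → ℝ, Measurable g → (∃ C, ∀ x, |g x| ≤ C) →
      ∫ ω, g (X ω) * (T ω * Y1 ω) ∂P = ∫ ω, g (X ω) * (e (X ω) * Y1 ω) ∂P)
    (hUnconf0 : ∀ g : 𝒳 → ℝ, Measurable g → (∃ C, ∀ x, |g x| ≤ C) →
      ∫ ω, g (X ω) * ((1 - T ω) * Y0 ω) ∂P = ∫ ω, g (X ω) * ((1 - e (X ω)) * Y0 ω) ∂P)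
    -- multi-accuracy with the inverse propensity weights as test functions
    (hMA1 : |∫ ω, (Y ω - μt1 (X ω)) * (T ω / e (X ω)) ∂P| ≤ α)
    (hMA0 : |∫ ω, (Y ω - μt0 (X ω)) * ((1 - T ω) / (1 - e (X ω))) ∂P| ≤ α) :
    |(∫ ω, (μt1 (X ω) - μt0 (X ω)) ∂P) - ∫ ω, (Y1 ω - Y0 ω) ∂P| ≤ 2 * α := by
  classical
  obtain ⟨C1, hC1⟩ := hμt1b
  obtain ⟨C0, hC0⟩ := hμt0b
  have hepos : ∀ x, 0 < e x := fun x => lt_of_lt_of_le hν (heb x).1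
  have h1epos : ∀ x, 0 < 1 - e x := fun x => by have := (heb x).2; linarith
  have hene : ∀ x, e x ≠ 0 := fun x => (hepos x).ne'
  have h1ene : ∀ x, 1 - e x ≠ 0 := fun x => (h1epos x).ne'
  have hinvb : ∀ x, |(e x)⁻¹| ≤ ν⁻¹ := fun x => by
    rw [abs_of_pos (inv_pos.mpr (hepos x))]
    exact inv_anti₀ hν (heb x).1
  have h1invb : ∀ x, |(1 - e x)⁻¹| ≤ ν⁻¹ := fun x => by
    rw [abs_of_pos (inv_pos.mpr (h1epos x))]
    exact inv_anti₀ hν (by have := (heb x).2; linarith)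
  have hTb : ∀ ω, |T ω| ≤ 1 := fun ω => by rcases hTbin ω with h | h <;> simp [h]
  have h1Tb : ∀ ω, |1 - T ω| ≤ 1 := fun ω => by rcases hTbin ω with h | h <;> simp [h]
  -- measurabilities
  have hg1 : Measurable (fun x => (e x)⁻¹) := he.inv
  have hg1' : Measurable (fun x => (1 - e x)⁻¹) := (measurable_const.sub he).inv
  have hg2 : Measurable (fun x => μt1 x / e x) := hμt1.div he
  have hg2' : Measurable (fun x => μt0 x / (1 - e x)) := hμt0.div (measurable_const.sub he)
  have hg2b : ∀ x, |μt1 x / e x| ≤ C1 * ν⁻¹ := fun x => by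
    rw [div_eq_mul_inv]; exact absMulLe (hC1 x) (hinvb x)
  have hg2b' : ∀ x, |μt0 x / (1 - e x)| ≤ C0 * ν⁻¹ := fun x => by
    rw [div_eq_mul_inv]; exact absMulLe (hC0 x) (h1invb x)
  -- integrabilities
  have i1 : MeasureTheory.Integrable (fun ω => (e (X ω))⁻¹ * (T ω * Y1 ω)) P :=
    intOfBdd P ((hg1.comp hX).mul (hT.mul hY1)) (ν⁻¹ * (1 * B))
      (fun ω => absMulLe (hinvb _) (absMulLe (hTb ω) (hY1b ω)))
  have i2 : MeasureTheory.Integrable (fun ω => (μt1 (X ω) / e (X ω)) * T ω) P :=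
    intOfBdd P ((hg2.comp hX).mul hT) ((C1 * ν⁻¹) * 1)
      (fun ω => absMulLe (hg2b _) (hTb ω))
  have i1' : MeasureTheory.Integrable (fun ω => (1 - e (X ω))⁻¹ * ((1 - T ω) * Y0 ω)) P :=
    intOfBdd P ((hg1'.comp hX).mul ((measurable_const.sub hT).mul hY0)) (ν⁻¹ * (1 * B))
      (fun ω => absMulLe (h1invb _) (absMulLe (h1Tb ω) (hY0b ω)))
  have i2' : MeasureTheory.Integrable (fun ω => (μt0 (X ω) / (1 - e (X ω))) * (1 - T ω)) P :=
    intOfBdd P ((hg2'.comp hX).mul (measurable_const.sub hT)) ((C0 * ν⁻¹) * 1)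
      (fun ω => absMulLe (hg2b' _) (h1Tb ω))
  have iY1 : MeasureTheory.Integrable Y1 P := intOfBdd P hY1 B hY1b
  have iY0 : MeasureTheory.Integrable Y0 P := intOfBdd P hY0 B hY0b
  have iM1 : MeasureTheory.Integrable (fun ω => μt1 (X ω)) P :=
    intOfBdd P (hμt1.comp hX) C1 (fun ω => hC1 _)
  have iM0 : MeasureTheory.Integrable (fun ω => μt0 (X ω)) P :=
    intOfBdd P (hμt0.comp hX) C0 (fun ω => hC0 _)
  -- arm 1
  have e1 : ∫ ω, (Y ω - μt1 (X ω)) * (T ω / e (X ω)) ∂P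
      = (∫ ω, (e (X ω))⁻¹ * (T ω * Y1 ω) ∂P) - ∫ ω, (μt1 (X ω) / e (X ω)) * T ω ∂P := by
    rw [← MeasureTheory.integral_sub i1 i2]
    apply MeasureTheory.integral_congr_ae
    filter_upwards with ω
    have hTY : Y ω * T ω = T ω * Y1 ω := by
      rcases hTbin ω with h | h <;> rw [hcons ω, h] <;> ring
    have : (Y ω - μt1 (X ω)) * (T ω / e (X ω))
        = (Y ω * T ω) * (e (X ω))⁻¹ - (μt1 (X ω) / e (X ω)) * T ω := by ring
    rw [this, hTY]; ring
  have u1 : ∫ ω, (e (X ω))⁻¹ * (T ω * Y1 ω) ∂P = ∫ ω, Y1 ω ∂P := by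
    rw [hUnconf1 (fun x => (e x)⁻¹) hg1 ⟨ν⁻¹, hinvb⟩]
    apply MeasureTheory.integral_congr_ae
    filter_upwards with ω
    have h := hene (X ω)
    field_simp
  have c1 : ∫ ω, (μt1 (X ω) / e (X ω)) * T ω ∂P = ∫ ω, μt1 (X ω) ∂P := by
    rw [hCE_T (fun x => μt1 x / e x) hg2 ⟨C1 * ν⁻¹, hg2b⟩]
    apply MeasureTheory.integral_congr_ae
    filter_upwards with ω
    have h := hene (X ω)
    field_simp
  have hA1 : |(∫ ω, Y1 ω ∂P) - ∫ ω, μt1 (X ω) ∂P| ≤ α := by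
    rw [← u1, ← c1, ← e1]; exact hMA1
  -- arm 0
  have e0 : ∫ ω, (Y ω - μt0 (X ω)) * ((1 - T ω) / (1 - e (X ω))) ∂P
      = (∫ ω, (1 - e (X ω))⁻¹ * ((1 - T ω) * Y0 ω) ∂P)
        - ∫ ω, (μt0 (X ω) / (1 - e (X ω))) * (1 - T ω) ∂P := by
    rw [← MeasureTheory.integral_sub i1' i2']
    apply MeasureTheory.integral_congr_ae
    filter_upwards with ω
    have hTY : Y ω * (1 - T ω) = (1 - T ω) * Y0 ω := by
      rcases hTbin ω with h | h <;> rw [hcons ω, h] <;> ring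
    have : (Y ω - μt0 (X ω)) * ((1 - T ω) / (1 - e (X ω)))
        = (Y ω * (1 - T ω)) * (1 - e (X ω))⁻¹
          - (μt0 (X ω) / (1 - e (X ω))) * (1 - T ω) := by ring
    rw [this, hTY]; ring
  have u0 : ∫ ω, (1 - e (X ω))⁻¹ * ((1 - T ω) * Y0 ω) ∂P = ∫ ω, Y0 ω ∂P := by
    rw [hUnconf0 (fun x => (1 - e x)⁻¹) hg1' ⟨ν⁻¹, h1invb⟩]
    apply MeasureTheory.integral_congr_ae
    filter_upwards with ω
    have h := h1ene (X ω)
    field_simp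
  have c0 : ∫ ω, (μt0 (X ω) / (1 - e (X ω))) * (1 - T ω) ∂P = ∫ ω, μt0 (X ω) ∂P := by
    have key : ∫ ω, (fun x => μt0 x / (1 - e x)) (X ω) * (1 - T ω) ∂P
        = ∫ ω, (fun x => μt0 x / (1 - e x)) (X ω) * (1 - e (X ω)) ∂P := by
      have iga : MeasureTheory.Integrable (fun ω => (μt0 (X ω) / (1 - e (X ω)))) P :=
        intOfBdd P (hg2'.comp hX) (C0 * ν⁻¹) (fun ω => hg2b' _)
      have igaT : MeasureTheory.Integrable (fun ω => (μt0 (X ω) / (1 - e (X ω))) * T ω) P :=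
        intOfBdd P ((hg2'.comp hX).mul hT) ((C0 * ν⁻¹) * 1)
          (fun ω => absMulLe (hg2b' _) (hTb ω))
      have igae : MeasureTheory.Integrable (fun ω => (μt0 (X ω) / (1 - e (X ω))) * e (X ω)) P :=
        intOfBdd P ((hg2'.comp hX).mul (he.comp hX)) ((C0 * ν⁻¹) * 1)
          (fun ω => absMulLe (hg2b' _) (by
            have := hepos (X ω); have := (heb (X ω)).2
            rw [abs_of_pos ‹0 < e (X ω)›]; linarith))
      have l1 : ∫ ω, (μt0 (X ω) / (1 - e (X ω))) * (1 - T ω) ∂P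
          = (∫ ω, (μt0 (X ω) / (1 - e (X ω))) ∂P)
            - ∫ ω, (μt0 (X ω) / (1 - e (X ω))) * T ω ∂P := by
        rw [← MeasureTheory.integral_sub iga igaT]
        apply MeasureTheory.integral_congr_ae; filter_upwards with ω; ring
      have l2 : ∫ ω, (μt0 (X ω) / (1 - e (X ω))) * (1 - e (X ω)) ∂P
          = (∫ ω, (μt0 (X ω) / (1 - e (X ω))) ∂P)
            - ∫ ω, (μt0 (X ω) / (1 - e (X ω))) * e (X ω) ∂P := by
        rw [← MeasureTheory.integral_sub iga igae]
        apply MeasureTheory.integral_congr_ae; filter_upwards with ω; ring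
      rw [l1, l2, hCE_T (fun x => μt0 x / (1 - e x)) hg2' ⟨C0 * ν⁻¹, hg2b'⟩]
    rw [key]
    apply MeasureTheory.integral_congr_ae
    filter_upwards with ω
    have h := h1ene (X ω)
    field_simp
  have hA0 : |(∫ ω, Y0 ω ∂P) - ∫ ω, μt0 (X ω) ∂P| ≤ α := by
    rw [← u0, ← c0, ← e0]; exact hMA0
  -- combine
  rw [MeasureTheory.integral_sub iM1 iM0, MeasureTheory.integral_sub iY1 iY0]
  have habs1 := abs_sub_comm (∫ ω, Y1 ω ∂P) (∫ ω, μt1 (X ω) ∂P)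
  have habs0 := abs_sub_comm (∫ ω, Y0 ω ∂P) (∫ ω, μt0 (X ω) ∂P)
  have key : ((∫ ω, μt1 (X ω) ∂P) - ∫ ω, μt0 (X ω) ∂P)
      - ((∫ ω, Y1 ω ∂P) - ∫ ω, Y0 ω ∂P)
      = ((∫ ω, μt1 (X ω) ∂P) - ∫ ω, Y1 ω ∂P)
        - ((∫ ω, μt0 (X ω) ∂P) - ∫ ω, Y0 ω ∂P) := by ring
  rw [key]
  calc _ ≤ |(∫ ω, μt1 (X ω) ∂P) - ∫ ω, Y1 ω ∂P|
        + |(∫ ω, μt0 (X ω) ∂P) - ∫ ω, Y0 ω ∂P| := abs_sub _ _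
    _ ≤ 2 * α := by rw [← habs1, ← habs0] at *; linarith
end

section
/- Let P be a probability measure on 𝒳 × {0,1} × ℝ with marginal P_X on 𝒳 and treatment-conditional covariate laws P_{X1}, P_{X0}. Let Q be a probability measure on 𝒳 absolutely continuous w.r.t. both P_{X1} and P_{X0}, with likelihood ratios w₁ = dQ/dP_{X1} and w₀ = dQ/dP_{X0}. Suppose μ̃₁, μ̃₀ : 𝒳 → ℝ are bounded measurable with, for every c in a class 𝒞 of bounded measurable functions, |E[(Y − μ̃₁(X)) c(X) w₁(X) | T=1]| ≤ α and |E[(Y − μ̃₀(X)) c(X) w₀(X) | T=0]| ≤ α. Under unconfoundedness and consistency, for all c ∈ 𝒞: |E_Q[(τ̃(X) − τ(X)) c(X)]| ≤ 2α, where τ̃ = μ̃₁ − μ̃₀ and τ(x) = E[Y(1) − Y(0) | X = x]. -/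
/-!
On each treatment arm, the change of measure turns `E_Q[(μ̃ₜ - μₜ) c]` into
`E[(μ̃ₜ(X) - μₜ(X)) c(X) wₜ(X) | T = t]`, and because `μₜ(X)` is the regression of `Y` on `X`
within the arm, `μₜ(X)` may be replaced by `Y` there. What remains is minus the
multi-accuracy residual of that arm, of absolute value at most `α`. The CATE error is the
difference of the two arms' errors, hence at most `2α`.
-/

open MeasureTheory

section Bounded

variable {α : Type*} {f g : α → ℝ}

lemma exists_abs_sub_le (hf : ∃ C, ∀ x, |f x| ≤ C) (hg : ∃ C, ∀ x, |g x| ≤ C) :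
    ∃ C, ∀ x, |f x - g x| ≤ C := by
  obtain ⟨Cf, hCf⟩ := hf
  obtain ⟨Cg, hCg⟩ := hg
  exact ⟨Cf + Cg, fun x => (abs_sub _ _).trans (add_le_add (hCf x) (hCg x))⟩

lemma exists_abs_mul_le (hf : ∃ C, ∀ x, |f x| ≤ C) (hg : ∃ C, ∀ x, |g x| ≤ C) :
    ∃ C, ∀ x, |f x * g x| ≤ C := by
  obtain ⟨Cf, hCf⟩ := hf
  obtain ⟨Cg, hCg⟩ := hg
  refine ⟨Cf * Cg, fun x => ?_⟩
  rw [abs_mul]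
  exact mul_le_mul (hCf x) (hCg x) (abs_nonneg _) ((abs_nonneg _).trans (hCf x))

lemma integrable_of_abs_le {m : MeasurableSpace α} {μ : Measure α} [IsFiniteMeasure μ]
    (hf : Measurable f) (hb : ∃ C, ∀ x, |f x| ≤ C) : Integrable f μ :=
  hb.elim fun C hC => Integrable.of_bound hf.aestronglyMeasurable C (ae_of_all _ hC)

end Bounded

section OneArm

variable {Ω 𝒳 : Type*} [MeasurableSpace Ω] [MeasurableSpace 𝒳] {P : Measure Ω} {Q : Measure 𝒳}
  {X : Ω → 𝒳} {S Y : Ω → ℝ} {w μ μt c : 𝒳 → ℝ} {p : ℝ}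

/-- Testing the change of measure against `f = 1` shows that `w ∘ X * S` has nonzero
integral, which forces integrability since a non-integrable function has Bochner integral `0`. -/
lemma integrable_weight_of_integral_eq [IsFiniteMeasure Q] [NeZero Q]
    (hw : ∀ f : 𝒳 → ℝ, Measurable f → (∃ C, ∀ x, |f x| ≤ C) →
      ∫ x, f x ∂Q = (∫ ω, f (X ω) * w (X ω) * S ω ∂P) / p) :
    Integrable (fun ω => w (X ω) * S ω) P := by
  have hmass := hw 1 measurable_const ⟨1, fun _ => by simp⟩
  simp only [Pi.one_apply, integral_const, smul_eq_mul, mul_one, one_mul] at hmass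
  refine Integrable.of_integral_ne_zero fun h0 => ?_
  rw [h0, zero_div] at hmass
  exact (measureReal_univ_pos (μ := Q)).ne' hmass

lemma integral_sub_mul_eq_neg_residual [IsFiniteMeasure Q] [NeZero Q]
    (hX : Measurable X) (hY : Measurable Y) (hwm : Measurable w) (hμm : Measurable μ)
    (hμtm : Measurable μt) (hcm : Measurable c)
    (hYb : ∃ C, ∀ ω, |Y ω| ≤ C) (hμb : ∃ C, ∀ x, |μ x| ≤ C) (hμtb : ∃ C, ∀ x, |μt x| ≤ C)
    (hcb : ∃ C, ∀ x, |c x| ≤ C)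
    (hw : ∀ f : 𝒳 → ℝ, Measurable f → (∃ C, ∀ x, |f x| ≤ C) →
      ∫ x, f x ∂Q = (∫ ω, f (X ω) * w (X ω) * S ω ∂P) / p)
    (hCE : ∀ f : 𝒳 → ℝ, Measurable f →
      Integrable (fun ω => f (X ω) * Y ω * S ω) P →
      Integrable (fun ω => f (X ω) * μ (X ω) * S ω) P →
      ∫ ω, f (X ω) * Y ω * S ω ∂P = ∫ ω, f (X ω) * μ (X ω) * S ω ∂P) :
    ∫ x, (μt x - μ x) * c x ∂Q = -((∫ ω, (Y ω - μt (X ω)) * c (X ω) * w (X ω) * S ω ∂P) / p) := by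
  have hweight := integrable_weight_of_integral_eq hw
  have hint : ∀ h : Ω → ℝ, Measurable h → (∃ C, ∀ ω, |h ω| ≤ C) →
      Integrable (fun ω => c (X ω) * w (X ω) * h ω * S ω) P := by
    rintro h hm ⟨C, hC⟩
    obtain ⟨Cc, hCc⟩ := hcb
    have hcw := hweight.bdd_mul (hcm.comp hX).aestronglyMeasurable (ae_of_all _ (hCc <| X ·))
    refine (hcw.bdd_mul hm.aestronglyMeasurable (ae_of_all _ hC)).congr (ae_of_all _ fun ω => ?_)
    simp only [Function.comp_apply]
    ring
  have hIY := hint Y hY hYb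
  have hIμ := hint (fun ω => μ (X ω)) (hμm.comp hX) (hμb.imp fun _ h ω => h (X ω))
  have hIμt := hint (fun ω => μt (X ω)) (hμtm.comp hX) (hμtb.imp fun _ h ω => h (X ω))
  calc ∫ x, (μt x - μ x) * c x ∂Q
      = (∫ ω, (μt (X ω) - μ (X ω)) * c (X ω) * w (X ω) * S ω ∂P) / p :=
        hw _ ((hμtm.sub hμm).mul hcm) (exists_abs_mul_le (exists_abs_sub_le hμtb hμb) hcb)
    _ = (∫ ω, c (X ω) * w (X ω) * μt (X ω) * S ω ∂P
          - ∫ ω, c (X ω) * w (X ω) * μ (X ω) * S ω ∂P) / p := by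
        rw [← integral_sub hIμt hIμ]
        congr 2 with ω
        ring
    _ = (∫ ω, c (X ω) * w (X ω) * μt (X ω) * S ω ∂P
          - ∫ ω, c (X ω) * w (X ω) * Y ω * S ω ∂P) / p := by
        rw [hCE (fun x => c x * w x) (hcm.mul hwm) hIY hIμ]
    _ = -((∫ ω, (Y ω - μt (X ω)) * c (X ω) * w (X ω) * S ω ∂P) / p) := by
        rw [← integral_sub hIμt hIY, ← neg_div, ← integral_neg]
        congr 2 with ω
        ring

end OneArm

theorem multiaccuracy_cate_external_shift_general
    {Ω 𝒳 : Type*} [MeasurableSpace Ω] [MeasurableSpace 𝒳]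
    (P : Measure Ω)
    (Q : Measure 𝒳) [IsProbabilityMeasure Q]
    (X : Ω → 𝒳) (T Y Y1 Y0 : Ω → ℝ)
    (w1 w0 μ1 μ0 μt1 μt0 τ : 𝒳 → ℝ) (𝒞 : Set (𝒳 → ℝ)) (α p1 : ℝ)
    (hX : Measurable X) (hY : Measurable Y)
    (hw1m : Measurable w1) (hw0m : Measurable w0)
    (hμ1m : Measurable μ1) (hμ0m : Measurable μ0)
    (hμt1m : Measurable μt1) (hμt0m : Measurable μt0)
    (hTbin : ∀ ω, T ω = 0 ∨ T ω = 1)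
    (B : ℝ) (hY1b : ∀ ω, |Y1 ω| ≤ B) (hY0b : ∀ ω, |Y0 ω| ≤ B)
    (hμ1b : ∀ x, |μ1 x| ≤ B) (hμ0b : ∀ x, |μ0 x| ≤ B)
    (hμt1b : ∃ C, ∀ x, |μt1 x| ≤ C) (hμt0b : ∃ C, ∀ x, |μt0 x| ≤ C)
    -- consistency: `Y = Y(T)`
    (hcons : ∀ ω, Y ω = T ω * Y1 ω + (1 - T ω) * Y0 ω)
    -- members of the test class are bounded and measurable
    (h𝒞 : ∀ c ∈ 𝒞, Measurable c ∧ ∃ C, ∀ x, |c x| ≤ C)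
    -- `w₁ = dQ/dP_{X1}` : change of measure from the treated-arm covariate law to `Q`
    (hw1 : ∀ f : 𝒳 → ℝ, Measurable f → (∃ C, ∀ x, |f x| ≤ C) →
      ∫ x, f x ∂Q = (∫ ω, f (X ω) * w1 (X ω) * T ω ∂P) / p1)
    -- `w₀ = dQ/dP_{X0}` : change of measure from the control-arm covariate law to `Q`
    (hw0 : ∀ f : 𝒳 → ℝ, Measurable f → (∃ C, ∀ x, |f x| ≤ C) →
      ∫ x, f x ∂Q = (∫ ω, f (X ω) * w0 (X ω) * (1 - T ω) ∂P) / (1 - p1))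
    -- `μ_t(x) = E[Y | X=x, T=t]` a.s. (against measurable test functions `f` with
    -- the requisite integrability)
    (hμ1CE : ∀ f : 𝒳 → ℝ, Measurable f →
      Integrable (fun ω => f (X ω) * Y ω * T ω) P →
      Integrable (fun ω => f (X ω) * μ1 (X ω) * T ω) P →
      ∫ ω, f (X ω) * Y ω * T ω ∂P = ∫ ω, f (X ω) * μ1 (X ω) * T ω ∂P)
    (hμ0CE : ∀ f : 𝒳 → ℝ, Measurable f →
      Integrable (fun ω => f (X ω) * Y ω * (1 - T ω)) P →
      Integrable (fun ω => f (X ω) * μ0 (X ω) * (1 - T ω)) P →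
      ∫ ω, f (X ω) * Y ω * (1 - T ω) ∂P = ∫ ω, f (X ω) * μ0 (X ω) * (1 - T ω) ∂P)
    -- `τ(x) = E[Y(1) − Y(0) | X = x]`
    (hτ : ∀ x, τ x = μ1 x - μ0 x)
    -- multi-accuracy over the product class `𝒞 × {w₁}` resp. `𝒞 × {w₀}`
    (hMA1 : ∀ c ∈ 𝒞,
      |(∫ ω, (Y ω - μt1 (X ω)) * c (X ω) * w1 (X ω) * T ω ∂P) / p1| ≤ α)
    (hMA0 : ∀ c ∈ 𝒞,
      |(∫ ω, (Y ω - μt0 (X ω)) * c (X ω) * w0 (X ω) * (1 - T ω) ∂P) / (1 - p1)| ≤ α) :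
    ∀ c ∈ 𝒞, |∫ x, ((μt1 x - μt0 x) - τ x) * c x ∂Q| ≤ 2 * α := by
  intro c hc
  obtain ⟨hcm, hcb⟩ := h𝒞 c hc
  have hYb : ∃ C, ∀ ω, |Y ω| ≤ C :=
    ⟨B, fun ω => by rcases hTbin ω with hT | hT <;> simp [hcons ω, hT, hY1b, hY0b]⟩
  have h1 := integral_sub_mul_eq_neg_residual hX hY hw1m hμ1m hμt1m hcm hYb ⟨B, hμ1b⟩ hμt1b hcb
    hw1 hμ1CE
  have h0 := integral_sub_mul_eq_neg_residual (S := fun ω => 1 - T ω) hX hY hw0m hμ0m hμt0m hcm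
    hYb ⟨B, hμ0b⟩ hμt0b hcb hw0 hμ0CE
  calc |∫ x, ((μt1 x - μt0 x) - τ x) * c x ∂Q|
      = |∫ x, (μt1 x - μ1 x) * c x ∂Q - ∫ x, (μt0 x - μ0 x) * c x ∂Q| := by
        rw [← integral_sub
          (integrable_of_abs_le (f := fun x => (μt1 x - μ1 x) * c x) ((hμt1m.sub hμ1m).mul hcm)
            (exists_abs_mul_le (exists_abs_sub_le hμt1b ⟨B, hμ1b⟩) hcb))
          (integrable_of_abs_le (f := fun x => (μt0 x - μ0 x) * c x) ((hμt0m.sub hμ0m).mul hcm)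
            (exists_abs_mul_le (exists_abs_sub_le hμt0b ⟨B, hμ0b⟩) hcb))]
        congr 2 with x
        rw [hτ]
        ring
    _ ≤ |∫ x, (μt1 x - μ1 x) * c x ∂Q| + |∫ x, (μt0 x - μ0 x) * c x ∂Q| := abs_sub _ _
    _ ≤ α + α := by
        rw [h1, h0, abs_neg, abs_neg]
        exact add_le_add (hMA1 c hc) (hMA0 c hc)
    _ = 2 * α := by ring

/-- Robust CATE bias control under unknown covariate shift
(Proposition 2 of the paper). Let `P` be the law of `(X,T,Y)` with treatment-conditional
covariate laws `P_{X1}, P_{X0}`, and let `Q` be a target covariate distribution with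
likelihood ratios `w₁ = dQ/dP_{X1}`, `w₀ = dQ/dP_{X0}` (encoded by the change-of-measure
identities `∫ f dQ = E[f(X) w_t(X) | T=t]`, where `E[· | T=t]` is expectation conditional
on the event `{T=t}`, of probability `p₁` resp. `1 − p₁`). If the post-processed outcome
models `μ̃₁, μ̃₀` satisfy, for every `c` in a class `𝒞` of bounded measurable test functions,
`|E[(Y − μ̃₁(X)) c(X) w₁(X) | T=1]| ≤ α` and `|E[(Y − μ̃₀(X)) c(X) w₀(X) | T=0]| ≤ α`,
then under unconfoundedness and consistency, for all `c ∈ 𝒞`: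
`|E_Q[(τ̃(X) − τ(X)) c(X)]| ≤ 2α`, where `τ̃ = μ̃₁ − μ̃₀` and `τ(x) = E[Y(1) − Y(0) | X=x]`
(the pointwise difference of versions `μ₁, μ₀` of `E[Y(t) | X=x]`).
`T : Ω → ℝ` takes values in `{0,1}`. -/
theorem multiaccuracy_cate_external_shift
    {Ω 𝒳 : Type*} [MeasurableSpace Ω] [MeasurableSpace 𝒳]
    (P : Measure Ω) [IsProbabilityMeasure P]
    (Q : Measure 𝒳) [IsProbabilityMeasure Q]
    (X : Ω → 𝒳) (T Y Y1 Y0 : Ω → ℝ)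
    (w1 w0 μ1 μ0 μt1 μt0 τ : 𝒳 → ℝ) (𝒞 : Set (𝒳 → ℝ)) (α p1 : ℝ)
    (hX : Measurable X) (hT : Measurable T) (hY : Measurable Y)
    (hY1 : Measurable Y1) (hY0 : Measurable Y0)
    (hw1m : Measurable w1) (hw0m : Measurable w0)
    (hμ1m : Measurable μ1) (hμ0m : Measurable μ0)
    (hμt1m : Measurable μt1) (hμt0m : Measurable μt0)
    (hTbin : ∀ ω, T ω = 0 ∨ T ω = 1)
    (B : ℝ) (hY1b : ∀ ω, |Y1 ω| ≤ B) (hY0b : ∀ ω, |Y0 ω| ≤ B)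
    (hμ1b : ∀ x, |μ1 x| ≤ B) (hμ0b : ∀ x, |μ0 x| ≤ B)
    (hμt1b : ∃ C, ∀ x, |μt1 x| ≤ C) (hμt0b : ∃ C, ∀ x, |μt0 x| ≤ C)
    -- consistency: `Y = Y(T)`
    (hcons : ∀ ω, Y ω = T ω * Y1 ω + (1 - T ω) * Y0 ω)
    -- probabilities of treatment arms
    (hp1 : p1 = ∫ ω, T ω ∂P) (hp1pos : 0 < p1) (hp1lt : p1 < 1)
    -- members of the test class are bounded and measurable
    (h𝒞 : ∀ c ∈ 𝒞, Measurable c ∧ ∃ C, ∀ x, |c x| ≤ C)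
    -- `w₁ = dQ/dP_{X1}` : change of measure from the treated-arm covariate law to `Q`
    (hw1 : ∀ f : 𝒳 → ℝ, Measurable f → (∃ C, ∀ x, |f x| ≤ C) →
      ∫ x, f x ∂Q = (∫ ω, f (X ω) * w1 (X ω) * T ω ∂P) / p1)
    -- `w₀ = dQ/dP_{X0}` : change of measure from the control-arm covariate law to `Q`
    (hw0 : ∀ f : 𝒳 → ℝ, Measurable f → (∃ C, ∀ x, |f x| ≤ C) →
      ∫ x, f x ∂Q = (∫ ω, f (X ω) * w0 (X ω) * (1 - T ω) ∂P) / (1 - p1))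
    -- `μ_t(x) = E[Y | X=x, T=t]` a.s. (against measurable test functions `f` with
    -- the requisite integrability)
    (hμ1CE : ∀ f : 𝒳 → ℝ, Measurable f →
      Integrable (fun ω => f (X ω) * Y ω * T ω) P →
      Integrable (fun ω => f (X ω) * μ1 (X ω) * T ω) P →
      ∫ ω, f (X ω) * Y ω * T ω ∂P = ∫ ω, f (X ω) * μ1 (X ω) * T ω ∂P)
    (hμ0CE : ∀ f : 𝒳 → ℝ, Measurable f →
      Integrable (fun ω => f (X ω) * Y ω * (1 - T ω)) P →
      Integrable (fun ω => f (X ω) * μ0 (X ω) * (1 - T ω)) P →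
      ∫ ω, f (X ω) * Y ω * (1 - T ω) ∂P = ∫ ω, f (X ω) * μ0 (X ω) * (1 - T ω) ∂P)
    -- unconfoundedness: `μ_t(x) = E[Y(t) | X=x]` a.s.
    (hUnconf1 : ∀ f : 𝒳 → ℝ, Measurable f → (∃ C, ∀ x, |f x| ≤ C) →
      ∫ ω, f (X ω) * Y1 ω ∂P = ∫ ω, f (X ω) * μ1 (X ω) ∂P)
    (hUnconf0 : ∀ f : 𝒳 → ℝ, Measurable f → (∃ C, ∀ x, |f x| ≤ C) →
      ∫ ω, f (X ω) * Y0 ω ∂P = ∫ ω, f (X ω) * μ0 (X ω) ∂P)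
    -- `τ(x) = E[Y(1) − Y(0) | X = x]`
    (hτ : ∀ x, τ x = μ1 x - μ0 x)
    -- integrability of the multi-accuracy integrands
    (hInt1 : ∀ c ∈ 𝒞, Integrable (fun ω => (Y ω - μt1 (X ω)) * c (X ω) * w1 (X ω) * T ω) P
      ∧ Integrable (fun ω => (Y ω - μ1 (X ω)) * c (X ω) * w1 (X ω) * T ω) P)
    (hInt0 : ∀ c ∈ 𝒞,
      Integrable (fun ω => (Y ω - μt0 (X ω)) * c (X ω) * w0 (X ω) * (1 - T ω)) P
      ∧ Integrable (fun ω => (Y ω - μ0 (X ω)) * c (X ω) * w0 (X ω) * (1 - T ω)) P)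
    -- multi-accuracy over the product class `𝒞 × {w₁}` resp. `𝒞 × {w₀}`
    (hMA1 : ∀ c ∈ 𝒞,
      |(∫ ω, (Y ω - μt1 (X ω)) * c (X ω) * w1 (X ω) * T ω ∂P) / p1| ≤ α)
    (hMA0 : ∀ c ∈ 𝒞,
      |(∫ ω, (Y ω - μt0 (X ω)) * c (X ω) * w0 (X ω) * (1 - T ω) ∂P) / (1 - p1)| ≤ α) :
    ∀ c ∈ 𝒞, |∫ x, ((μt1 x - μt0 x) - τ x) * c x ∂Q| ≤ 2 * α :=
  multiaccuracy_cate_external_shift_general P Q X T Y Y1 Y0 w1 w0 μ1 μ0 μt1 μt0 τ 𝒞 α p1 hX hY hw1m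
    hw0m hμ1m hμ0m hμt1m hμt0m hTbin B hY1b hY0b hμ1b hμ0b hμt1b hμt0b hcons h𝒞 hw1 hw0 hμ1CE hμ0CE
    hτ hMA1 hMA0
end

section
/- Let 𝒞 and ℋ be classes of measurable functions 𝒳 → ℝ with all products c·h bounded by 1. Suppose μ̃₁, μ̃₀ : 𝒳 → ℝ are bounded measurable functions such that for all c ∈ 𝒞, h ∈ ℋ: |E[(Y − μ̃₁(X)) · (𝟙[T=1]/e(X)) · c(X) h(X)]| ≤ α and |E[(Y − μ̃₀(X)) · (𝟙[T=0]/(1−e(X))) · c(X) h(X)]| ≤ α. Let φ(X,T,Y; μ̃) be the doubly-robust pseudo-outcome with true propensity e and outcome models μ̃₁, μ̃₀, let τ̃ = μ̃₁ − μ̃₀, and let τ : 𝒳 → ℝ be any bounded measurable function. Then |sup_{c,h ∈ 𝒞×ℋ} E[(φ(X,T,Y;μ̃) − τ(X)) c(X) h(X)] − sup_{c,h ∈ 𝒞×ℋ} E[(τ̃(X) − τ(X)) c(X) h(X)]| ≤ 2α. -/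
open MeasureTheory Set

/-!
The doubly-robust pseudo-outcome splits pointwise as
`φ = τ̃ + (T / e) (Y - μ̃₁) - ((1 - T) / (1 - e)) (Y - μ̃₀)`.
Integrated against `c · h`, the two inverse-propensity-weighted residual terms are exactly the
moments controlled by multi-accuracy, so the DR and plug-in moments differ by at most `2α` for
every `(c, h)`; the suprema then differ by at most `2α` since `|sup A - sup B| ≤ sup |A - B|`.
-/

theorem setOf_exists_mem_exists_mem_eq_image2 {α β γ : Type*} (f : α → β → γ) (s : Set α)
    (t : Set β) :
    {r | ∃ a ∈ s, ∃ b ∈ t, r = f a b} = image2 f s t := by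
  ext; simp only [mem_ofPred_eq, mem_image2, eq_comm]

theorem abs_csSup_image2_sub_csSup_image2_le {α β : Type*} {s : Set α} {t : Set β}
    (hs : s.Nonempty) (ht : t.Nonempty) {f g : α → β → ℝ} {ε : ℝ}
    (hg : BddAbove (image2 g s t)) (hfg : ∀ a ∈ s, ∀ b ∈ t, |f a b - g a b| ≤ ε) :
    |sSup (image2 f s t) - sSup (image2 g s t)| ≤ ε := by
  have csSup_le_add {f g : α → β → ℝ} (hg : BddAbove (image2 g s t))
      (hfg : ∀ a ∈ s, ∀ b ∈ t, |f a b - g a b| ≤ ε) :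
      sSup (image2 f s t) ≤ sSup (image2 g s t) + ε :=
    csSup_le (hs.image2 ht) <| forall_mem_image2.2 fun a ha b hb => by
      linarith [(abs_le.1 (hfg a ha b hb)).2, le_csSup hg (mem_image2_of_mem ha hb)]
  obtain ⟨M, hM⟩ := hg
  have hf : BddAbove (image2 f s t) := ⟨M + ε, forall_mem_image2.2 fun a ha b hb => by
    linarith [(abs_le.1 (hfg a ha b hb)).2, hM (mem_image2_of_mem ha hb)]⟩
  rw [abs_sub_le_iff, sub_le_iff_le_add', sub_le_iff_le_add']
  exact ⟨csSup_le_add ⟨M, hM⟩ hfg,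
    csSup_le_add hf fun a ha b hb => abs_sub_comm (f a b) _ ▸ hfg a ha b hb⟩

theorem abs_div_le_inv_of_eq_zero_or_one {t p ν : ℝ} (ht : t = 0 ∨ t = 1) (hν : 0 < ν)
    (hp : ν ≤ p) : |t / p| ≤ ν⁻¹ := by
  rcases ht with rfl | rfl
  · simp [hν.le]
  · rw [one_div, abs_of_pos (hν.trans_le hp |> inv_pos.2)]
    exact inv_anti₀ hν hp

noncomputable def drPseudoOutcome (e t y m₁ m₀ : ℝ) : ℝ :=
  (t - e) / (e * (1 - e)) * (y - if t = 1 then m₁ else m₀) + m₁ - m₀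

theorem drPseudoOutcome_eq {e t : ℝ} (ht : t = 0 ∨ t = 1) (he₀ : e ≠ 0) (he₁ : 1 - e ≠ 0)
    (y m₁ m₀ : ℝ) :
    drPseudoOutcome e t y m₁ m₀
      = m₁ - m₀ + ((y - m₁) * (t / e) - (y - m₀) * ((1 - t) / (1 - e))) := by
  rcases ht with rfl | rfl <;> simp only [drPseudoOutcome, zero_ne_one, if_true, if_false] <;>
    field_simp <;> ring

theorem MeasureTheory.memLp_top_of_abs_le {Ω : Type*} [MeasurableSpace Ω] {P : Measure Ω}
    {f : Ω → ℝ} (hf : Measurable f) {C : ℝ} (hC : ∀ ω, |f ω| ≤ C) : MemLp f ⊤ P :=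
  memLp_top_of_bound hf.aestronglyMeasurable C (ae_of_all _ hC)

theorem MeasureTheory.MemLp.mul_of_top {Ω : Type*} [MeasurableSpace Ω] {P : Measure Ω}
    {f g : Ω → ℝ} (hf : MemLp f ⊤ P) (hg : MemLp g ⊤ P) : MemLp (fun ω => f ω * g ω) ⊤ P :=
  hg.mul' hf

theorem integral_drPseudoOutcome_sub_mul_eq {Ω : Type*} [MeasurableSpace Ω] {P : Measure Ω}
    {T Y p m₁ m₀ τ w : Ω → ℝ} (hT : ∀ ω, T ω = 0 ∨ T ω = 1) (hp : ∀ ω, 0 < p ω ∧ p ω < 1)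
    (hg : Integrable (fun ω => (m₁ ω - m₀ ω - τ ω) * w ω) P)
    (hu : Integrable (fun ω => (Y ω - m₁ ω) * (T ω / p ω) * w ω) P)
    (hv : Integrable (fun ω => (Y ω - m₀ ω) * ((1 - T ω) / (1 - p ω)) * w ω) P) :
    ∫ ω, (drPseudoOutcome (p ω) (T ω) (Y ω) (m₁ ω) (m₀ ω) - τ ω) * w ω ∂P
      = ∫ ω, (m₁ ω - m₀ ω - τ ω) * w ω ∂P
        + (∫ ω, (Y ω - m₁ ω) * (T ω / p ω) * w ω ∂P
          - ∫ ω, (Y ω - m₀ ω) * ((1 - T ω) / (1 - p ω)) * w ω ∂P) := by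
  rw [← integral_sub' hu hv, ← integral_add hg (hu.sub hv)]
  refine integral_congr_ae (ae_of_all _ fun ω => ?_)
  dsimp only [Pi.sub_apply]
  rw [drPseudoOutcome_eq (hT ω) (hp ω).1.ne' (sub_pos.2 (hp ω).2).ne']
  ring

section PlugIn

variable {Ω 𝒳 : Type*} [MeasurableSpace Ω] {P : Measure Ω}
  [IsProbabilityMeasure P] {X : Ω → 𝒳} {T Y w : Ω → ℝ} {e μt1 μt0 τ : 𝒳 → ℝ} {B : ℝ}

theorem abs_integral_plugIn_mul_le (hμt1b : ∀ x, |μt1 x| ≤ B) (hμt0b : ∀ x, |μt0 x| ≤ B)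
    (hτb : ∀ x, |τ x| ≤ B) (hwb : ∀ ω, |w ω| ≤ 1) :
    |∫ ω, (μt1 (X ω) - μt0 (X ω) - τ (X ω)) * w ω ∂P| ≤ 3 * B := by
  have hbound (ω : Ω) : |(μt1 (X ω) - μt0 (X ω) - τ (X ω)) * w ω| ≤ 3 * B := by
    have hsum : |μt1 (X ω) - μt0 (X ω) - τ (X ω)| ≤ 3 * B := by
      linarith [abs_sub (μt1 (X ω) - μt0 (X ω)) (τ (X ω)), abs_sub (μt1 (X ω)) (μt0 (X ω)),
        hμt1b (X ω), hμt0b (X ω), hτb (X ω)]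
    rw [abs_mul]
    exact (mul_le_of_le_one_right (abs_nonneg _) (hwb ω)).trans hsum
  simpa using norm_integral_le_of_norm_le_const (μ := P)
    (ae_of_all _ fun ω => (Real.norm_eq_abs _).trans_le (hbound ω))

theorem abs_integral_drPseudoOutcome_sub_integral_plugIn_le [MeasurableSpace 𝒳] {α ν : ℝ}
    (hX : Measurable X) (hT : Measurable T) (hY : Measurable Y) (he : Measurable e)
    (hμt1 : Measurable μt1) (hμt0 : Measurable μt0) (hτ : Measurable τ) (hw : Measurable w)
    (hTbin : ∀ ω, T ω = 0 ∨ T ω = 1) (hYb : ∀ ω, |Y ω| ≤ B) (hμt1b : ∀ x, |μt1 x| ≤ B)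
    (hμt0b : ∀ x, |μt0 x| ≤ B) (hτb : ∀ x, |τ x| ≤ B) (hwb : ∀ ω, |w ω| ≤ 1)
    (hν : 0 < ν) (heb : ∀ x, ν ≤ e x ∧ e x ≤ 1 - ν)
    (hMA1 : |∫ ω, (Y ω - μt1 (X ω)) * (T ω / e (X ω)) * w ω ∂P| ≤ α)
    (hMA0 : |∫ ω, (Y ω - μt0 (X ω)) * ((1 - T ω) / (1 - e (X ω))) * w ω ∂P| ≤ α) :
    |∫ ω, (drPseudoOutcome (e (X ω)) (T ω) (Y ω) (μt1 (X ω)) (μt0 (X ω)) - τ (X ω)) * w ω ∂P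
      - ∫ ω, (μt1 (X ω) - μt0 (X ω) - τ (X ω)) * w ω ∂P| ≤ 2 * α := by
  have hY' : MemLp Y ⊤ P := memLp_top_of_abs_le hY hYb
  have hμt1' : MemLp (fun ω => μt1 (X ω)) ⊤ P :=
    memLp_top_of_abs_le (by fun_prop) (hμt1b <| X ·)
  have hμt0' : MemLp (fun ω => μt0 (X ω)) ⊤ P :=
    memLp_top_of_abs_le (by fun_prop) (hμt0b <| X ·)
  have hτ' : MemLp (fun ω => τ (X ω)) ⊤ P := memLp_top_of_abs_le (by fun_prop) (hτb <| X ·)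
  have hw' : MemLp w ⊤ P := memLp_top_of_abs_le hw hwb
  have hipw1 : MemLp (fun ω => T ω / e (X ω)) ⊤ P := memLp_top_of_abs_le (by fun_prop) fun ω =>
    abs_div_le_inv_of_eq_zero_or_one (hTbin ω) hν (heb (X ω)).1
  have hipw0 : MemLp (fun ω => (1 - T ω) / (1 - e (X ω))) ⊤ P :=
    memLp_top_of_abs_le (by fun_prop) fun ω =>
      abs_div_le_inv_of_eq_zero_or_one (by rcases hTbin ω with h | h <;> simp [h]) hν
        (by linarith [(heb (X ω)).2])
  have he_mem (x : 𝒳) : 0 < e x ∧ e x < 1 := by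
    constructor <;> linarith [heb x]
  rw [integral_drPseudoOutcome_sub_mul_eq hTbin (he_mem <| X ·)
    ((((hμt1'.sub hμt0').sub hτ').mul_of_top hw').integrable le_top)
    ((((hY'.sub hμt1').mul_of_top hipw1).mul_of_top hw').integrable le_top)
    ((((hY'.sub hμt0').mul_of_top hipw0).mul_of_top hw').integrable le_top),
    add_sub_cancel_left]
  exact (abs_sub _ _).trans (by linarith)

end PlugIn

/-- Proposition 3 of the paper. A multi-accurate T-learner over the richer
product class `{𝟙[T=1]/e(X), 𝟙[T=0]/(1−e(X))} × 𝒞 × ℋ` is, up to an additive `2α`, a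
multi-accurate DR-learner over `𝒞 × ℋ`: with `φ` the doubly-robust pseudo-outcome with true
propensity `e` and outcome models `μ̃₁, μ̃₀`, `τ̃ = μ̃₁ − μ̃₀`, and `τ` any bounded measurable
function,
`|sup_{c,h} E[(φ − τ(X)) c(X) h(X)] − sup_{c,h} E[(τ̃(X) − τ(X)) c(X) h(X)]| ≤ 2α`.
`T : Ω → ℝ` takes values in `{0,1}`, so `T ω = 𝟙[T=1]` and `1 − T ω = 𝟙[T=0]`. -/
theorem multiaccurate_Tlearner_is_multiaccurate_DRlearner
    {Ω 𝒳 : Type*} [MeasurableSpace Ω] [MeasurableSpace 𝒳]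
    (P : Measure Ω) [IsProbabilityMeasure P]
    (X : Ω → 𝒳) (T Y : Ω → ℝ) (e μt1 μt0 τ : 𝒳 → ℝ)
    (𝒞 ℋ : Set (𝒳 → ℝ)) (α : ℝ)
    (hX : Measurable X) (hT : Measurable T) (hY : Measurable Y)
    (he : Measurable e) (hμt1 : Measurable μt1) (hμt0 : Measurable μt0)
    (hτ : Measurable τ)
    (hTbin : ∀ ω, T ω = 0 ∨ T ω = 1)
    (B : ℝ) (hYb : ∀ ω, |Y ω| ≤ B) (hμt1b : ∀ x, |μt1 x| ≤ B)
    (hμt0b : ∀ x, |μt0 x| ≤ B) (hτb : ∀ x, |τ x| ≤ B)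
    (ν : ℝ) (hν : 0 < ν) (heb : ∀ x, ν ≤ e x ∧ e x ≤ 1 - ν)
    (h𝒞ne : 𝒞.Nonempty) (hℋne : ℋ.Nonempty)
    (h𝒞 : ∀ c ∈ 𝒞, Measurable c) (hℋ : ∀ h ∈ ℋ, Measurable h)
    -- all products `c·h` are bounded by 1
    (hprodb : ∀ c ∈ 𝒞, ∀ h ∈ ℋ, ∀ x, |c x * h x| ≤ 1)
    -- multi-accuracy of the outcome models over the richer product class
    (hMA1 : ∀ c ∈ 𝒞, ∀ h ∈ ℋ,
      |∫ ω, (Y ω - μt1 (X ω)) * (T ω / e (X ω)) * (c (X ω) * h (X ω)) ∂P| ≤ α)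
    (hMA0 : ∀ c ∈ 𝒞, ∀ h ∈ ℋ,
      |∫ ω, (Y ω - μt0 (X ω)) * ((1 - T ω) / (1 - e (X ω))) * (c (X ω) * h (X ω)) ∂P| ≤ α) :
    |sSup {r : ℝ | ∃ c ∈ 𝒞, ∃ h ∈ ℋ, r =
        ∫ ω, ((((T ω - e (X ω)) / (e (X ω) * (1 - e (X ω))))
            * (Y ω - (if T ω = 1 then μt1 (X ω) else μt0 (X ω)))
            + μt1 (X ω) - μt0 (X ω)) - τ (X ω)) * (c (X ω) * h (X ω)) ∂P}
      - sSup {r : ℝ | ∃ c ∈ 𝒞, ∃ h ∈ ℋ, r =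
        ∫ ω, ((μt1 (X ω) - μt0 (X ω)) - τ (X ω)) * (c (X ω) * h (X ω)) ∂P}| ≤ 2 * α := by
  rw [setOf_exists_mem_exists_mem_eq_image2, setOf_exists_mem_exists_mem_eq_image2]
  refine abs_csSup_image2_sub_csSup_image2_le h𝒞ne hℋne
    ⟨3 * B, forall_mem_image2.2 fun c hc h hh => ?_⟩ fun c hc h hh => ?_
  · exact (le_abs_self _).trans
      (abs_integral_plugIn_mul_le hμt1b hμt0b hτb (hprodb c hc h hh <| X ·))
  · exact abs_integral_drPseudoOutcome_sub_integral_plugIn_le hX hT hY he hμt1 hμt0 hτ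
      (((h𝒞 c hc).comp hX).mul ((hℋ h hh).comp hX)) hTbin hYb hμt1b hμt0b hτb
      (hprodb c hc h hh <| X ·) hν heb (hMA1 c hc h hh) (hMA0 c hc h hh)
end
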